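/- In the binary coordinate-permutation model (k = 2), let n ≥ 2, let 2 ≤ t ≤ n, and let h ∈ S_n be a single cycle of length t (i.e. h is a cycle whose support has cardinality t). Then the transition probability from the identity e to h is Q(e,h) = C(2n−t, n) / (n! · 2^{n−1}), where C(·,·) denotes the binomial coefficient. -/

import Mathlib

/-!
Every word is fixed by `e`, so `Q(e,h) = 2⁻ⁿ ∑_{x ∈ X_h} 1/|G_x|`, and a binary word with `z` zeros
has stabilizer `S_z × S_{n-z}`, so `1/|G_x| = C(n,z)/n!`. A word is fixed by the cycle `h` iff it
is constant on the support `S` of `h`, i.e. iff its zero set `A` contains `S` or avoids it.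
Complementation `A ↦ Aᶜ` exchanges these two families and preserves `C(n,|A|)`, and by Vandermonde
`∑_{A ⊆ Sᶜ} C(n,|A|) = ∑_b C(n-t,b) C(n,b) = C(2n-t,n)`.
-/

open Finset

noncomputable section

variable (n k : ℕ)

/-- Fixed words of `g ∈ S_n` under the coordinate-permutation action on `[k]^n`. -/
def fixedWords (g : Equiv.Perm (Fin n)) : Finset (Fin n → Fin k) :=
  Finset.univ.filter fun x => (fun i => x (g⁻¹ i)) = x

/-- Stabilizer of a word `x ∈ [k]^n` under the coordinate-permutation action. -/
def stabWord (x : Fin n → Fin k) : Finset (Equiv.Perm (Fin n)) :=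
  Finset.univ.filter fun g => (fun i => x (g⁻¹ i)) = x

/-- The dual Burnside kernel for the coordinate-permutation model `S_n ↷ [k]^n`. -/
def Q (g h : Equiv.Perm (Fin n)) : ℝ :=
  ∑ x ∈ fixedWords n k g ∩ fixedWords n k h,
    1 / (((fixedWords n k g).card : ℝ) * ((stabWord n k x).card : ℝ))

namespace Nat

theorem sum_range_choose_mul_choose (m n : ℕ) :
    ∑ i ∈ range (m + 1), m.choose i * n.choose i = (m + n).choose n := by
  rw [← choose_symm_add, add_choose_eq, ← Finset.Nat.sum_antidiagonal_swap,
    Finset.Nat.sum_antidiagonal_eq_sum_range_succ_mk]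
  refine sum_congr rfl fun i hi => ?_
  simp only [Prod.swap_prod_mk]
  rw [choose_symm (by simpa [Nat.lt_succ_iff] using hi)]

end Nat

section BinaryWords

variable {α : Type*} [Fintype α] [DecidableEq α]

def zeroSetEquiv : (α → Fin 2) ≃ Finset α where
  toFun x := {a | x a = 0}
  invFun A a := if a ∈ A then 0 else 1
  left_inv x := by
    funext a
    by_cases hx : x a = 0
    · simp [hx]
    · simp [Fin.eq_one_of_ne_zero _ hx]
  right_inv A := by ext a; by_cases ha : a ∈ A <;> simp [ha]

theorem mem_zeroSetEquiv {x : α → Fin 2} {a : α} : a ∈ zeroSetEquiv x ↔ x a = 0 := by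
  simp [zeroSetEquiv]

theorem forall_eq_on_iff_subset_or_disjoint_zeroSetEquiv {S : Finset α} {x : α → Fin 2} :
    (∀ i ∈ S, ∀ j ∈ S, x i = x j) ↔ S ⊆ zeroSetEquiv x ∨ Disjoint S (zeroSetEquiv x) := by
  simp only [subset_iff, disjoint_left, mem_zeroSetEquiv]
  constructor
  · intro hx
    by_contra! hne
    obtain ⟨⟨i, hi, hi0⟩, j, hj, hj0⟩ := hne
    exact hi0 ((hx i hi j hj).trans hj0)
  · rintro (h0 | h1) i hi j hj
    · rw [h0 hi, h0 hj]
    · rw [Fin.eq_one_of_ne_zero _ (h1 hi), Fin.eq_one_of_ne_zero _ (h1 hj)]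

theorem sum_filter_supset_eq_sum_powerset_compl {M : Type*} [AddCommMonoid M] (S : Finset α)
    (f : Finset α → M) : ∑ A with S ⊆ A, f A = ∑ A ∈ Sᶜ.powerset, f Aᶜ := by
  refine sum_nbij' compl compl (fun A hA => ?_) (fun A hA => ?_) (fun A _ => compl_compl A)
    (fun A _ => compl_compl A) (fun A _ => by rw [compl_compl])
  · simpa using hA
  · simpa [subset_compl_comm] using hA

theorem filter_disjoint_eq_powerset_compl (S : Finset α) :
    ({A | Disjoint S A} : Finset (Finset α)) = Sᶜ.powerset := by
  ext A; simp [subset_compl_iff_disjoint_left]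

theorem sum_filter_subset_or_disjoint_choose {S : Finset α} (hS : S.Nonempty) :
    ∑ A with S ⊆ A ∨ Disjoint S A, (Fintype.card α).choose #A
      = 2 * (2 * Fintype.card α - #S).choose (Fintype.card α) := by
  set N := Fintype.card α
  have hdisj : Disjoint ({A | S ⊆ A} : Finset (Finset α)) ({A | Disjoint S A} : Finset _) :=
    disjoint_filter.2 fun A _ hsub hSA =>
      hS.ne_empty (disjoint_self.1 (Disjoint.mono_right hsub hSA))
  have hcompl (A : Finset α) : N.choose #Aᶜ = N.choose #A := by
    rw [card_compl, Nat.choose_symm (card_le_univ A)]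
  have hN : 2 * N - #S = #Sᶜ + N := by rw [card_compl]; have := card_le_univ S; omega
  rw [filter_or, sum_union hdisj, sum_filter_supset_eq_sum_powerset_compl,
    filter_disjoint_eq_powerset_compl]
  simp only [hcompl, ← two_mul]
  rw [sum_powerset_apply_card, hN]
  simp only [smul_eq_mul, Nat.sum_range_choose_mul_choose]

end BinaryWords

section FixedWords

open Equiv.Perm

variable {n k}

theorem mem_fixedWords_iff {g : Equiv.Perm (Fin n)} {x : Fin n → Fin k} :
    x ∈ fixedWords n k g ↔ ∀ i, x (g i) = x i := by
  simp only [fixedWords, mem_filter, mem_univ, true_and, funext_iff]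
  exact ⟨fun hx i => by simpa using (hx (g i)).symm, fun hx i => by simpa using (hx (g⁻¹ i)).symm⟩

theorem fixedWords_one : fixedWords n k 1 = univ := by
  ext x; simp [fixedWords]

theorem Q_one_left (h : Equiv.Perm (Fin n)) :
    Q n k 1 h = ∑ x ∈ fixedWords n k h, 1 / ((k : ℝ) ^ n * (stabWord n k x).card) := by
  simp [Q, fixedWords_one]

theorem card_stabWord (x : Fin n → Fin k) :
    #(stabWord n k x) = ∏ c, (#{i | x i = c}).factorial := by
  have hinv : {g : Equiv.Perm (Fin n) // (fun i => x (g⁻¹ i)) = x}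
      ≃ {g : Equiv.Perm (Fin n) // x ∘ g = x} :=
    (Equiv.inv _).subtypeEquiv fun _ => Iff.rfl
  simp only [stabWord, ← Fintype.card_subtype, Fintype.card_congr hinv,
    DomMulAct.stabilizer_card]

theorem card_stabWord_two (x : Fin n → Fin 2) :
    #(stabWord n 2 x) = (#(zeroSetEquiv x)).factorial * (n - #(zeroSetEquiv x)).factorial := by
  have hones : ({i | x i = 1} : Finset (Fin n)) = (zeroSetEquiv x)ᶜ := by
    ext i
    simp only [mem_filter, mem_univ, true_and, mem_compl, mem_zeroSetEquiv]
    omega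
  rw [card_stabWord, Fin.prod_univ_two, hones, card_compl, Fintype.card_fin]
  rfl

theorem one_div_card_stabWord_two (x : Fin n → Fin 2) :
    1 / (#(stabWord n 2 x) : ℝ) = n.choose #(zeroSetEquiv x) / n.factorial := by
  have hz : #(zeroSetEquiv x) ≤ n := (card_le_univ _).trans_eq (Fintype.card_fin n)
  rw [card_stabWord_two, div_eq_div_iff (by positivity) (by positivity), one_mul,
    ← Nat.choose_mul_factorial_mul_factorial hz, mul_assoc]
  push_cast
  ring

theorem mem_fixedWords_iff_of_isCycle {h : Equiv.Perm (Fin n)} (hh : h.IsCycle)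
    {x : Fin n → Fin k} : x ∈ fixedWords n k h ↔ ∀ i ∈ h.support, ∀ j ∈ h.support, x i = x j := by
  rw [mem_fixedWords_iff]
  constructor
  · intro hx i hi j hj
    have hpow (m : ℕ) : x ((h ^ m) i) = x i := by
      induction m with
      | zero => rfl
      | succ m ih => rw [pow_succ', Equiv.Perm.mul_apply, hx, ih]
    obtain ⟨m, rfl⟩ := hh.exists_pow_eq (mem_support.1 hi) (mem_support.1 hj)
    exact (hpow m).symm
  · intro hx i
    by_cases hi : i ∈ h.support
    · exact hx _ (apply_mem_support.2 hi) _ hi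
    · rw [notMem_support.1 hi]

theorem sum_fixedWords_choose_of_isCycle {h : Equiv.Perm (Fin n)} (hh : h.IsCycle) :
    ∑ x ∈ fixedWords n 2 h, n.choose #(zeroSetEquiv x) = 2 * (2 * n - #h.support).choose n := by
  have hS := hh.nonempty_support
  rw [sum_equiv zeroSetEquiv (t := {A | h.support ⊆ A ∨ Disjoint h.support A})
    (g := fun A => n.choose #A) (fun x => ?_) (fun _ _ => rfl)]
  · simpa using sum_filter_subset_or_disjoint_choose hS
  · rw [mem_fixedWords_iff_of_isCycle hh, forall_eq_on_iff_subset_or_disjoint_zeroSetEquiv]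
    simp

end FixedWords

theorem binary_identity_to_tcycle (t : ℕ)
    (h : Equiv.Perm (Fin n)) (hcyc : h.IsCycle) (hsupp : h.support.card = t) :
    Q n 2 1 h = (Nat.choose (2 * n - t) n : ℝ) / ((n.factorial : ℝ) * 2 ^ (n - 1)) := by
  obtain ⟨i, -⟩ := hcyc.nonempty_support
  have hpow : (2 : ℝ) ^ n = 2 * 2 ^ (n - 1) := by rw [← pow_succ', Nat.sub_add_cancel i.pos]
  have hsum : ∑ x ∈ fixedWords n 2 h, (n.choose #(zeroSetEquiv x) : ℝ)
      = 2 * (2 * n - t).choose n := by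
    exact_mod_cast hsupp ▸ sum_fixedWords_choose_of_isCycle hcyc
  calc Q n 2 1 h
      = ∑ x ∈ fixedWords n 2 h, (n.choose #(zeroSetEquiv x) : ℝ) / (2 ^ n * n.factorial) := by
        rw [Q_one_left]
        refine sum_congr rfl fun x _ => ?_
        rw [← one_div_mul_one_div, one_div_card_stabWord_two]
        push_cast
        ring
    _ = (2 * n - t).choose n / (n.factorial * 2 ^ (n - 1)) := by
        rw [← sum_div, hsum, hpow]
        field_simp

end
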